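/- Let σ = ∩_{i=1}^r {x ∈ ℝ^m : ⟨n_i, x⟩ ≤ b_i} be a compact convex polytope of full dimension m, where each n_i ∈ ℝ^m is a unit vector and each σ_i := σ ∩ {x : ⟨n_i, x⟩ = b_i} is a facet (an (m−1)-dimensional face) of σ. For a vector v ∈ ℝ^m set f_v(x) := ∏_{i : ⟨v, n_i⟩ ≠ 0} (⟨n_i, x⟩ − b_i). Then the first-order operator f_v ∂_v annihilates the characteristic distribution δ_σ; explicitly, ∫_σ D_v(f_v · φ) dx = 0 for every compactly supported smooth function φ : ℝ^m → ℝ. (For σ = [0,1] ⊂ ℝ this says x(x−1)∂_x annihilates δ_{[0,1]}; for the standard 2-simplex it says x(x+y−1)∂_x and y(x+y−1)∂_y annihilate δ_Δ.) -/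

import Mathlib

open MeasureTheory RealInnerProductSpace

/-- The dimension of a polytope: the dimension of its affine hull. -/
noncomputable def polyDim {m : ℕ} (σ : Set (EuclideanSpace ℝ (Fin m))) : ℕ :=
  Module.finrank ℝ (affineSpan ℝ σ).direction

section helpers

lemma contDiff_finset_prod' {E : Type*} [NormedAddCommGroup E] [NormedSpace ℝ E]
    {ι : Type*} (S : Finset ι) (f : ι → E → ℝ) (h : ∀ i, ContDiff ℝ (⊤ : ℕ∞) (f i)) :
    ContDiff ℝ (⊤ : ℕ∞) (fun y => ∏ i ∈ S, f i y) := by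
  classical
  induction S using Finset.induction_on with
  | empty => simpa using contDiff_const
  | insert _ _ hni ih => simp only [Finset.prod_insert hni]; exact (h _).mul ih

lemma exit_facet {m r : ℕ} (n : Fin r → EuclideanSpace ℝ (Fin m)) (b : Fin r → ℝ)
    (σ : Set (EuclideanSpace ℝ (Fin m)))
    (hσ : σ = ⋂ i : Fin r, {x : EuclideanSpace ℝ (Fin m) | ⟪n i, x⟫ ≤ b i})
    (x w : EuclideanSpace ℝ (Fin m)) (hx : x ∈ σ)
    (h : ∀ t > (0:ℝ), x + t • w ∉ σ) :
    ∃ i, ⟪n i, x⟫ = b i ∧ 0 < ⟪n i, w⟫ := by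
  classical
  by_contra hcon
  push_neg at hcon
  have hxi : ∀ i, ⟪n i, x⟫ ≤ b i := by
    intro i
    have := hx
    rw [hσ] at this
    exact Set.mem_iInter.1 this i
  rcases Nat.eq_zero_or_pos r with hr | hr
  · subst hr
    exact h 1 one_pos (by rw [hσ]; simp)
  have hrne : (Finset.univ : Finset (Fin r)).Nonempty := by
    simpa [Finset.univ_nonempty_iff, Fin.pos_iff_nonempty] using hr
  set ε : Fin r → ℝ := fun i =>
    if 0 < ⟪n i, w⟫ then (b i - ⟪n i, x⟫) / ⟪n i, w⟫ else 1 with hε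
  have hεpos : ∀ i, 0 < ε i := by
    intro i
    simp only [hε]
    split_ifs with hiw
    · have hne : ⟪n i, x⟫ ≠ b i := fun heq => absurd hiw (not_lt.2 (hcon i heq))
      exact div_pos (by cases lt_or_eq_of_le (hxi i) with
        | inl h' => linarith
        | inr h' => exact absurd h' hne) hiw
    · exact one_pos
  set t := Finset.univ.inf' hrne ε with ht
  have htpos : 0 < t := by
    rw [ht, Finset.lt_inf'_iff]
    exact fun i _ => hεpos i
  refine h t htpos ?_
  rw [hσ, Set.mem_iInter]
  intro i
  have hkey : ⟪n i, x + t • w⟫ = ⟪n i, x⟫ + t * ⟪n i, w⟫ := by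
    rw [inner_add_right, real_inner_smul_right]
  show ⟪n i, x + t • w⟫ ≤ b i
  rw [hkey]
  rcases le_or_gt ⟪n i, w⟫ 0 with hiw | hiw
  · nlinarith [hxi i]
  · have hti : t ≤ ε i := Finset.inf'_le _ (Finset.mem_univ i)
    have heps : ε i = (b i - ⟪n i, x⟫) / ⟪n i, w⟫ := by
      simp only [hε]; rw [if_pos hiw]
    rw [heps] at hti
    have := (le_div_iff₀ hiw).1 hti
    linarith

end helpers



lemma line_ftc (u : ℝ → ℝ) (hu : ContDiff ℝ (⊤ : ℕ∞) u)
    (T : Set ℝ) (hT : Convex ℝ T) (hTc : IsClosed T) (hTb : Bornology.IsBounded T)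
    (h1 : ∀ t ∈ T, (∀ s > (0:ℝ), t + s ∉ T) → u t = 0)
    (h2 : ∀ t ∈ T, (∀ s > (0:ℝ), t - s ∉ T) → u t = 0) :
    ∫ t in T, deriv u t = 0 := by
  rcases T.eq_empty_or_nonempty with h | hne
  · simp [h]
  have hcpt : IsCompact T := Metric.isCompact_of_isClosed_isBounded hTc hTb
  set a := sInf T with ha
  set b := sSup T with hb
  have haT : a ∈ T := hcpt.sInf_mem hne
  have hbT : b ∈ T := hcpt.sSup_mem hne
  have hab : a ≤ b := csInf_le_csSup hne hTb.bddBelow hTb.bddAbove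
  have hTeq : T = Set.Icc a b := by
    apply Set.Subset.antisymm
    · intro x hx
      exact ⟨csInf_le hTb.bddBelow hx, le_csSup hTb.bddAbove hx⟩
    · exact hT.ordConnected.out haT hbT
  have hua : u a = 0 := by
    refine h2 a haT fun s hs hmem => ?_
    rw [hTeq] at hmem
    linarith [hmem.1]
  have hub : u b = 0 := by
    refine h1 b hbT fun s hs hmem => ?_
    rw [hTeq] at hmem
    linarith [hmem.2]
  rw [hTeq, MeasureTheory.integral_Icc_eq_integral_Ioc, ← intervalIntegral.integral_of_le hab]
  rw [intervalIntegral.integral_deriv_eq_sub (fun x _ => (hu.differentiable (by simp)).differentiableAt)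
    ((hu.continuous_deriv (by simp)).intervalIntegrable a b)]
  rw [hua, hub, sub_zero]


lemma core {k : ℕ} (σ : Set (EuclideanSpace ℝ (Fin (k+1))))
    (hconv : Convex ℝ σ) (hcl : IsClosed σ) (hbd : Bornology.IsBounded σ)
    (w : EuclideanSpace ℝ (Fin (k+1))) (hw : ‖w‖ = 1)
    (g : EuclideanSpace ℝ (Fin (k+1)) → ℝ) (hg : ContDiff ℝ (⊤ : ℕ∞) g)
    (h1 : ∀ x ∈ σ, (∀ t > (0:ℝ), x + t • w ∉ σ) → g x = 0)
    (h2 : ∀ x ∈ σ, (∀ t > (0:ℝ), x - t • w ∉ σ) → g x = 0) :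
    ∫ x in σ, fderiv ℝ g x w ∂(volume) = 0 := by
  classical
  -- orthonormal basis with bas 0 = w
  have hON : Orthonormal ℝ (Set.restrict {(0 : Fin (k+1))} (fun _ => w)) := by
    constructor
    · intro i; exact hw
    · intro i j hij; exact absurd (Subsingleton.elim i j) hij
  obtain ⟨bas, hbas⟩ := hON.exists_orthonormalBasis_extension_of_card_eq
    (by simp [finrank_euclideanSpace])
  have hb0 : bas 0 = w := hbas 0 rfl
  -- the composed measure preserving map  Θ : ℝ × (Fin k → ℝ) → E
  set ψ := (MeasurableEquiv.piFinSuccAbove (fun _ : Fin (k+1) => ℝ) 0).symm with hψdef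
  set Θ : ℝ × (Fin k → ℝ) → EuclideanSpace ℝ (Fin (k+1)) := fun p =>
    bas.repr.symm ((MeasurableEquiv.toLp 2 (Fin (k+1) → ℝ)) (ψ p)) with hΘ
  have hψ : MeasurePreserving ψ ((volume : Measure ℝ).prod (volume : Measure (Fin k → ℝ)))
      (volume : Measure (Fin (k+1) → ℝ)) := by
    have := (measurePreserving_piFinSuccAbove (fun _ : Fin (k+1) => (volume : Measure ℝ)) 0).symm
    simpa only [volume_pi] using this
  have hΘmp : MeasurePreserving Θ ((volume : Measure ℝ).prod (volume : Measure (Fin k → ℝ)))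
      (volume : Measure (EuclideanSpace ℝ (Fin (k+1)))) :=
    (bas.measurePreserving_repr_symm.comp
      ((EuclideanSpace.volume_preserving_symm_measurableEquiv_toLp (Fin (k+1))).symm)).comp hψ
  have hΘemb : MeasurableEmbedding Θ := by
    have : Θ = ⇑(ψ.trans ((MeasurableEquiv.toLp 2 (Fin (k+1) → ℝ)).trans
        bas.repr.symm.toHomeomorph.toMeasurableEquiv)) := rfl
    rw [this]; exact MeasurableEquiv.measurableEmbedding _
  -- the structure of Θ
  have hΘstruct : ∀ (t : ℝ) (y : Fin k → ℝ), Θ (t, y) = Θ (0, y) + t • w := by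
    intro t y
    have hcons : ψ (t, y) = ψ (0, y) + t • (Pi.single 0 1 : Fin (k+1) → ℝ) := by
      have e1 : ψ (t, y) = Fin.insertNth 0 t y := by
        simp [hψdef, MeasurableEquiv.piFinSuccAbove_symm_apply, Fin.insertNthEquiv]
      have e2 : ψ (0, y) = Fin.insertNth 0 0 y := by
        simp [hψdef, MeasurableEquiv.piFinSuccAbove_symm_apply, Fin.insertNthEquiv]
      rw [e1, e2]
      funext j
      refine Fin.cases ?_ (fun i => ?_) j <;>
        simp [Fin.insertNth_zero, Pi.single_eq_of_ne (Fin.succ_ne_zero _)]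
    rw [hΘ]
    simp only [hcons]
    have e3 : (MeasurableEquiv.toLp 2 (Fin (k+1) → ℝ))
        (ψ (0, y) + t • (Pi.single 0 1 : Fin (k+1) → ℝ))
        = (MeasurableEquiv.toLp 2 (Fin (k+1) → ℝ)) (ψ (0, y))
          + t • EuclideanSpace.single (0 : Fin (k+1)) (1:ℝ) := by
      rfl
    rw [e3, map_add, LinearIsometryEquiv.map_smul, bas.repr_symm_single, hb0]
  -- reduce set-integral to an iterated integral over the product space
  set F : EuclideanSpace ℝ (Fin (k+1)) → ℝ := fun x => fderiv ℝ g x w with hF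
  have hFcont : Continuous F := (hg.continuous_fderiv (by simp)).clm_apply continuous_const
  have hσm : MeasurableSet σ := hcl.measurableSet
  have hint : Integrable (σ.indicator F) (volume : Measure (EuclideanSpace ℝ (Fin (k+1)))) := by
    rw [integrable_indicator_iff hσm]
    exact hFcont.continuousOn.integrableOn_compact
      (Metric.isCompact_of_isClosed_isBounded hcl hbd)
  have step1 : ∫ x in σ, F x ∂(volume) = ∫ x, σ.indicator F x ∂(volume) :=
    (integral_indicator hσm).symm
  have step2 : ∫ x, σ.indicator F x ∂(volume)
      = ∫ p, σ.indicator F (Θ p) ∂((volume : Measure ℝ).prod (volume : Measure (Fin k → ℝ))) :=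
    (hΘmp.integral_comp hΘemb _).symm
  have hintc : Integrable (fun p => σ.indicator F (Θ p))
      ((volume : Measure ℝ).prod (volume : Measure (Fin k → ℝ))) :=
    (hΘmp.integrable_comp_emb hΘemb).2 hint
  have step3 : ∫ p, σ.indicator F (Θ p) ∂((volume : Measure ℝ).prod (volume : Measure (Fin k → ℝ)))
      = ∫ y, (∫ t, σ.indicator F (Θ (t, y)) ∂(volume : Measure ℝ))
          ∂(volume : Measure (Fin k → ℝ)) :=
    integral_prod_symm _ hintc
  rw [step1, step2, step3]
  -- inner integral vanishes for each y
  have hinner : ∀ y : Fin k → ℝ, ∫ t, σ.indicator F (Θ (t, y)) ∂(volume : Measure ℝ) = 0 := by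
    intro y
    set c : EuclideanSpace ℝ (Fin (k+1)) := Θ (0, y) with hc
    set L : ℝ → EuclideanSpace ℝ (Fin (k+1)) := fun t => c + t • w with hL
    have hLΘ : ∀ t, Θ (t, y) = L t := fun t => hΘstruct t y
    set T : Set ℝ := L ⁻¹' σ with hTdef
    have hLcont : Continuous L := continuous_const.add (continuous_id.smul continuous_const)
    have hTc : IsClosed T := hcl.preimage hLcont
    have hTm : MeasurableSet T := hTc.measurableSet
    set u : ℝ → ℝ := fun t => g (L t) with hud
    have hLsmooth : ContDiff ℝ (⊤ : ℕ∞) L := contDiff_const.add (contDiff_id.smul contDiff_const)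
    have hu : ContDiff ℝ (⊤ : ℕ∞) u := hg.comp hLsmooth
    have hLderiv : ∀ t, HasDerivAt L w t := by
      intro t
      have h := ((hasDerivAt_id t).smul_const w).const_add c
      rw [one_smul] at h
      exact h
    have hude : ∀ t, deriv u t = F (L t) := by
      intro t
      have : HasDerivAt u (fderiv ℝ g (L t) w) t := by
        have hgd : HasFDerivAt g (fderiv ℝ g (L t)) (L t) :=
          (hg.differentiable (by simp)).differentiableAt.hasFDerivAt
        exact hgd.comp_hasDerivAt t (hLderiv t)
      exact this.deriv
    have hindrw : (fun t => σ.indicator F (Θ (t, y))) = fun t => T.indicator (deriv u) t := by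
      funext t
      rw [hLΘ]
      by_cases h : L t ∈ σ
      · rw [Set.indicator_of_mem h, Set.indicator_of_mem (by exact h), hude]
      · rw [Set.indicator_of_notMem h, Set.indicator_of_notMem (by exact h)]
    rw [hindrw]
    simp only [integral_indicator hTm]
    -- apply line_ftc
    have hTconv : Convex ℝ T := by
      intro t1 ht1 t2 ht2 a b' ha hb' hab
      have key : L (a • t1 + b' • t2) = a • L t1 + b' • L t2 := by
        simp only [hL, smul_eq_mul]
        have : a • (c + t1 • w) + b' • (c + t2 • w)
            = (a + b') • c + (a * t1 + b' * t2) • w := by module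
        rw [this, hab, one_smul]
      show L _ ∈ σ
      rw [key]
      exact hconv ht1 ht2 ha hb' hab
    have hTb : Bornology.IsBounded T := by
      obtain ⟨C, hC⟩ := isBounded_iff_forall_norm_le.1 hbd
      refine (Metric.isBounded_Icc (-(C + ‖c‖)) (C + ‖c‖)).subset fun t ht => ?_
      have h1' : ‖L t‖ ≤ C := hC _ ht
      have h2' : ‖t‖ = ‖t • w‖ := by rw [norm_smul, hw, mul_one]
      have h3' : (t : ℝ) • w = L t - c := by simp [hL]
      have : ‖t‖ ≤ C + ‖c‖ := by
        rw [h2', h3']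
        calc ‖L t - c‖ ≤ ‖L t‖ + ‖c‖ := norm_sub_le _ _
        _ ≤ C + ‖c‖ := by linarith
      rw [Set.mem_Icc, ← abs_le]
      exact this
    have hend1 : ∀ t ∈ T, (∀ s > (0:ℝ), t + s ∉ T) → u t = 0 := by
      intro t ht hna
      refine h1 (L t) ht fun s hs => ?_
      have he : L (t + s) = L t + s • w := by
        simp only [hL, add_smul]; abel
      rw [← he]
      exact hna s hs
    have hend2 : ∀ t ∈ T, (∀ s > (0:ℝ), t - s ∉ T) → u t = 0 := by
      intro t ht hna
      refine h2 (L t) ht fun s hs => ?_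
      have he : L (t - s) = L t - s • w := by
        simp only [hL, sub_smul]; abel
      rw [← he]
      exact hna s hs
    exact line_ftc u hu T hTconv hTc hTb hend1 hend2
  simp only [hinner, integral_zero]


/-- let `σ = ⋂ i, {x | ⟪n i, x⟫ ≤ b i}` be a compact convex polytope of
full dimension `m`, where each `σ ∩ {x | ⟪n i, x⟫ = b i}` is a facet. For a vector `v`,
set `f_v x = ∏_{i : ⟪v, n i⟫ ≠ 0} (⟪n i, x⟫ - b i)`. Then the first-order operator
`f_v ∂_v` annihilates `δ_σ`: `∫_σ D_v (f_v · φ) dx = 0` for every test function `φ`. -/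
theorem stmt1 (m r : ℕ)
    (n : Fin r → EuclideanSpace ℝ (Fin m)) (b : Fin r → ℝ)
    (hn : ∀ i, ‖n i‖ = 1)
    (σ : Set (EuclideanSpace ℝ (Fin m)))
    (hσ : σ = ⋂ i : Fin r, {x : EuclideanSpace ℝ (Fin m) | ⟪n i, x⟫ ≤ b i})
    (hcpt : IsCompact σ)
    (hfull : (interior σ).Nonempty)
    (hfacet : ∀ i : Fin r,
      polyDim {x ∈ σ | ⟪n i, x⟫ = b i} = m - 1 ∧ ({x ∈ σ | ⟪n i, x⟫ = b i}).Nonempty) :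
    ∀ v : EuclideanSpace ℝ (Fin m),
      ∀ φ : EuclideanSpace ℝ (Fin m) → ℝ, ContDiff ℝ (⊤ : ℕ∞) φ → HasCompactSupport φ →
        ∫ x in σ,
          fderiv ℝ
            (fun y : EuclideanSpace ℝ (Fin m) =>
              (∏ i ∈ Finset.univ.filter fun i : Fin r => ⟪v, n i⟫ ≠ 0, (⟪n i, y⟫ - b i)) * φ y)
            x v ∂(volume) = 0 := by
  classical
  intro v φ hφ hφs
  by_cases hv : v = 0
  · simp [hv]
  -- m must be positive
  rcases Nat.eq_zero_or_pos m with hm | hm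
  · exfalso
    subst hm
    exact hv (Subsingleton.elim v 0)
  obtain ⟨k, rfl⟩ : ∃ k, m = k + 1 := ⟨m - 1, (Nat.succ_pred_eq_of_pos hm).symm⟩
  set S : Finset (Fin r) := Finset.univ.filter fun i : Fin r => ⟪v, n i⟫ ≠ 0 with hS
  set g : EuclideanSpace ℝ (Fin (k+1)) → ℝ :=
    fun y => (∏ i ∈ S, (⟪n i, y⟫ - b i)) * φ y with hg
  have hgsmooth : ContDiff ℝ (⊤ : ℕ∞) g := by
    refine ContDiff.mul ?_ hφ
    exact contDiff_finset_prod' S _ fun i =>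
      ((ContDiff.inner ℝ contDiff_const contDiff_id).sub contDiff_const)
  -- unit direction
  set w : EuclideanSpace ℝ (Fin (k+1)) := ‖v‖⁻¹ • v with hwdef
  have hw : ‖w‖ = 1 := norm_smul_inv_norm hv
  have hvw : v = ‖v‖ • w := by
    rw [hwdef, smul_smul, mul_inv_cancel₀ (norm_ne_zero_iff.2 hv), one_smul]
  have hvnorm : (0:ℝ) < ‖v‖ := norm_pos_iff.2 hv
  -- geometry of σ
  have hconv : Convex ℝ σ := by
    rw [hσ]
    exact convex_iInter fun i => convex_halfSpace_le
      ⟨fun x y => inner_add_right _ _ _, fun c x => real_inner_smul_right _ _ _⟩ (b i)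
  have hcl : IsClosed σ := hcpt.isClosed
  have hbd : Bornology.IsBounded σ := hcpt.isBounded
  -- vanishing of g on exit points
  have hmemS : ∀ i : Fin r, 0 ≠ ⟪n i, w⟫ → i ∈ S := by
    intro i hiw
    rw [hS, Finset.mem_filter]
    refine ⟨Finset.mem_univ _, fun h0 => hiw ?_⟩
    have hkey : ‖v‖ * ⟪w, n i⟫ = ⟪v, n i⟫ := by
      rw [← real_inner_smul_left, ← hvw]
    rw [← hkey] at h0
    have := mul_eq_zero.1 h0
    rcases this with h' | h'
    · exact absurd h' (ne_of_gt hvnorm)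
    · rw [real_inner_comm] at h'
      exact h'.symm
  have hgzero : ∀ i : Fin r, i ∈ S → ∀ x, ⟪n i, x⟫ = b i → g x = 0 := by
    intro i hi x hxi
    have hprod : (∏ j ∈ S, (⟪n j, x⟫ - b j)) = 0 :=
      Finset.prod_eq_zero hi (by rw [hxi, sub_self])
    show (∏ j ∈ S, (⟪n j, x⟫ - b j)) * φ x = 0
    rw [hprod, zero_mul]
  have h1 : ∀ x ∈ σ, (∀ t > (0:ℝ), x + t • w ∉ σ) → g x = 0 := by
    intro x hx hna
    obtain ⟨i, hib, hiw⟩ := exit_facet n b σ hσ x w hx hna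
    exact hgzero i (hmemS i (ne_of_lt hiw)) x hib
  have h2 : ∀ x ∈ σ, (∀ t > (0:ℝ), x - t • w ∉ σ) → g x = 0 := by
    intro x hx hna
    have hna' : ∀ t > (0:ℝ), x + t • (-w) ∉ σ := by
      intro t ht
      have : x + t • (-w) = x - t • w := by rw [smul_neg, ← sub_eq_add_neg]
      rw [this]
      exact hna t ht
    obtain ⟨i, hib, hiw⟩ := exit_facet n b σ hσ x (-w) hx hna'
    rw [inner_neg_right] at hiw
    refine hgzero i (hmemS i ?_) x hib
    intro h0
    rw [← h0] at hiw
    simp at hiw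
  -- apply core
  have hcore := core σ hconv hcl hbd w hw g hgsmooth h1 h2
  have : ∀ x, fderiv ℝ g x v = ‖v‖ • fderiv ℝ g x w := by
    intro x
    conv_lhs => rw [hvw]
    exact (fderiv ℝ g x).map_smul _ _
  calc ∫ x in σ, fderiv ℝ g x v ∂(volume)
      = ∫ x in σ, ‖v‖ • fderiv ℝ g x w ∂(volume) := by simp_rw [this]
    _ = ‖v‖ • ∫ x in σ, fderiv ℝ g x w ∂(volume) := integral_smul _ _
    _ = 0 := by rw [hcore, smul_zero]
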